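/- Let x be an observable on a σ-MV-effect algebra E such that x((-∞,t)) is a sharp element of E for every t ∈ ℝ. Then x(A) is sharp for every Borel set A ⊆ ℝ; i.e., x is a sharp observable. -/

import Mathlib

open Set

/-- A σ-complete MV-effect algebra: an MV-algebra (with `⊕`, `¬`, `⊥ = 0`,
`⊤ = 1`) whose natural order is the given lattice order and in which every
countable subset has a supremum and an infimum (given by `sSup`/`sInf`). -/
class SigmaMVEffectAlgebra (E : Type*) extends
    Lattice E, BoundedOrder E, SupSet E, InfSet E where
  oplus : E → E → E
  neg : E → E
  oplus_assoc : ∀ a b c : E, oplus (oplus a b) c = oplus a (oplus b c)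
  oplus_comm : ∀ a b : E, oplus a b = oplus b a
  oplus_bot : ∀ a : E, oplus a ⊥ = a
  neg_neg : ∀ a : E, neg (neg a) = a
  oplus_top : ∀ a : E, oplus a ⊤ = ⊤
  neg_bot : neg (⊥ : E) = ⊤
  luk : ∀ a b : E, oplus (neg (oplus (neg a) b)) b = oplus (neg (oplus (neg b) a)) a
  le_iff_oplus : ∀ a b : E, a ≤ b ↔ oplus (neg a) b = ⊤
  isLUB_sSup : ∀ s : Set E, s.Countable → IsLUB s (sSup s)
  isGLB_sInf : ∀ s : Set E, s.Countable → IsGLB s (sInf s)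

namespace SigmaMVEffectAlgebra

variable {E : Type*} [SigmaMVEffectAlgebra E]

open Classical in
/-- The partial effect-algebra addition of the MV-effect algebra:
`a + b` is defined iff `a ≤ b'`, and then `a + b = a ⊕ b`. -/
noncomputable def padd (a b : E) : Option E :=
  if a ≤ neg b then some (oplus a b) else none

/-- An observable on `E`: a `σ`-homomorphism from the Borel σ-algebra of `ℝ`
into `E`. -/
structure Observable (E : Type*) [SigmaMVEffectAlgebra E] where
  toFun : Set ℝ → E
  total : toFun Set.univ = ⊤
  additive : ∀ A B : Set ℝ, MeasurableSet A → MeasurableSet B → Disjoint A B →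
    padd (toFun A) (toFun B) = some (toFun (A ∪ B))
  cont : ∀ A : ℕ → Set ℝ, (∀ n, MeasurableSet (A n)) → Monotone A →
    IsLUB (Set.range fun n => toFun (A n)) (toFun (⋃ n, A n))

/-- An observable is bounded if `x([α,β]) = 1` for some interval. -/
def Observable.Bounded (x : Observable E) : Prop :=
  ∃ α β : ℝ, x.toFun (Set.Icc α β) = ⊤

/-- The spectral resolution `B_x(t) = x((-∞,t))` of an observable. -/
def spec (x : Observable E) (t : ℝ) : E := x.toFun (Set.Iio t)

end SigmaMVEffectAlgebra

/-!
Sharp elements of an MV-algebra are exactly the `⊕`-idempotents, equivalently the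
`⊙`-idempotents, so they are closed under `'`, under `⊕` and under suprema of sequences.
For an observable this makes `{A | x(A) sharp}` a Dynkin system: complements go to
complements, and a disjoint union is the supremum of the finite partial unions, whose
images are `⊕`-sums. It contains the π-system of the intervals `(-∞, t)`, which generates
the Borel sets.
-/

namespace SigmaMVEffectAlgebra

variable {E : Type*} [SigmaMVEffectAlgebra E]

local infixl:65 " ⊹ " => (oplus : E → E → E)
local prefix:max "∼" => (neg : E → E)
local notation:70 a " ⊙ " b => ∼(∼a ⊹ ∼b)

theorem neg_top : ∼(⊤ : E) = ⊥ := by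
  rw [← neg_bot, neg_neg]

theorem neg_oplus_self (a : E) : ∼a ⊹ a = ⊤ :=
  (le_iff_oplus a a).1 le_rfl

theorem le_oplus_right (a b : E) : b ≤ a ⊹ b := by
  rw [le_iff_oplus, ← oplus_assoc, oplus_comm (∼b) a, oplus_assoc, neg_oplus_self, oplus_top]

theorem le_oplus_left (a b : E) : a ≤ a ⊹ b :=
  oplus_comm b a ▸ le_oplus_right b a

theorem oplus_neg_neg_oplus_of_le {a b : E} (h : a ≤ b) : a ⊹ ∼(∼b ⊹ a) = b := by
  rw [oplus_comm, luk b a, (le_iff_oplus a b).1 h, neg_top, oplus_comm, oplus_bot]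

theorem oplus_le_oplus_left {a b : E} (c : E) (h : a ≤ b) : c ⊹ a ≤ c ⊹ b := by
  rw [← oplus_neg_neg_oplus_of_le h, ← oplus_assoc]
  exact le_oplus_left _ _

theorem oplus_le_oplus_right {a b : E} (c : E) (h : a ≤ b) : a ⊹ c ≤ b ⊹ c := by
  rw [oplus_comm a c, oplus_comm b c]
  exact oplus_le_oplus_left c h

theorem neg_antitone : Antitone (neg : E → E) := fun a b h => by
  rw [le_iff_oplus, neg_neg, oplus_comm]
  exact (le_iff_oplus a b).1 h

theorem le_neg_of_le_neg {a b : E} (h : a ≤ ∼b) : b ≤ ∼a := by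
  simpa only [neg_neg] using neg_antitone h

theorem neg_le_of_neg_le {a b : E} (h : ∼a ≤ b) : ∼b ≤ a := by
  simpa only [neg_neg] using neg_antitone h

theorem sup_eq_neg_oplus (a b : E) : a ⊔ b = ∼(∼a ⊹ b) ⊹ b := by
  apply le_antisymm
  · apply sup_le
    · rw [luk]
      exact le_oplus_right _ _
    · exact le_oplus_right _ _
  · calc ∼(∼a ⊹ b) ⊹ b ≤ ∼(∼(a ⊔ b) ⊹ b) ⊹ b :=
          oplus_le_oplus_right _ (neg_antitone (oplus_le_oplus_right _ (neg_antitone le_sup_left)))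
      _ = a ⊔ b := by
          rw [oplus_comm]
          exact oplus_neg_neg_oplus_of_le le_sup_right

theorem inf_eq_neg_sup_neg (a b : E) : a ⊓ b = ∼(∼a ⊔ ∼b) := by
  apply le_antisymm
  · exact le_neg_of_le_neg (sup_le (neg_antitone inf_le_left) (neg_antitone inf_le_right))
  · exact le_inf (neg_le_of_neg_le le_sup_left) (neg_le_of_neg_le le_sup_right)

theorem otimes_le_otimes {a b c d : E} (h₁ : a ≤ b) (h₂ : c ≤ d) : (a ⊙ c) ≤ b ⊙ d :=
  neg_antitone <| (oplus_le_oplus_right _ (neg_antitone h₁)).trans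
    (oplus_le_oplus_left _ (neg_antitone h₂))

theorem otimes_le_right (a b : E) : (a ⊙ b) ≤ b :=
  calc (a ⊙ b) ≤ (⊤ : E) ⊙ b := otimes_le_otimes le_top le_rfl
    _ = b := by rw [neg_top, oplus_comm, oplus_bot, neg_neg]

def IsSharp (a : E) : Prop := a ⊓ ∼a = ⊥

theorem IsSharp.neg {a : E} (h : IsSharp a) : IsSharp (∼a) := by
  rwa [IsSharp, neg_neg, inf_comm]

theorem isSharp_iff_oplus_self {a : E} : IsSharp a ↔ a ⊹ a = a := by
  rw [IsSharp, inf_eq_neg_sup_neg, neg_neg, sup_eq_neg_oplus, neg_neg]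
  constructor
  · intro h
    have h' : ∼(a ⊹ a) ⊹ a = ⊤ := by simpa [neg_neg, neg_bot] using congrArg neg h
    exact le_antisymm ((le_iff_oplus _ _).2 h') (le_oplus_left _ _)
  · intro h
    rw [h, neg_oplus_self, neg_top]

theorem isSharp_iff_otimes_self {a : E} : IsSharp a ↔ (a ⊙ a) = a := by
  constructor
  · intro h
    rw [isSharp_iff_oplus_self.1 h.neg, neg_neg]
  · intro h
    have h' : ∼a ⊹ ∼a = ∼a := by simpa only [neg_neg] using congrArg neg h
    simpa only [neg_neg] using (isSharp_iff_oplus_self.2 h').neg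

theorem IsSharp.oplus {a b : E} (ha : IsSharp a) (hb : IsSharp b) : IsSharp (a ⊹ b) := by
  rw [isSharp_iff_oplus_self] at *
  calc (a ⊹ b) ⊹ (a ⊹ b) = (a ⊹ a) ⊹ (b ⊹ b) := by
        rw [oplus_assoc, oplus_assoc, ← oplus_assoc b a b, oplus_comm b a, oplus_assoc]
    _ = a ⊹ b := by rw [ha, hb]

theorem IsSharp.of_isLUB_range {f : ℕ → E} {u : E} (hu : IsLUB (range f) u)
    (hf : ∀ n, IsSharp (f n)) : IsSharp u := by
  rw [isSharp_iff_otimes_self]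
  refine le_antisymm (otimes_le_right u u) (hu.2 ?_)
  rintro _ ⟨n, rfl⟩
  calc f n = (f n) ⊙ (f n) := (isSharp_iff_otimes_self.1 (hf n)).symm
    _ ≤ (u ⊙ u) := otimes_le_otimes (hu.1 ⟨n, rfl⟩) (hu.1 ⟨n, rfl⟩)

namespace Observable

open Function

variable (x : Observable E) {A B : Set ℝ}

theorem le_neg_and_oplus_eq_union (hA : MeasurableSet A) (hB : MeasurableSet B)
    (hAB : Disjoint A B) :
    x.toFun A ≤ ∼(x.toFun B) ∧ x.toFun A ⊹ x.toFun B = x.toFun (A ∪ B) := by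
  have h := x.additive A B hA hB hAB
  unfold padd at h
  split_ifs at h with hle
  exact ⟨hle, Option.some_injective _ h⟩

theorem map_empty : x.toFun ∅ = ⊥ := by
  have h := (x.le_neg_and_oplus_eq_union .empty .univ (empty_disjoint univ)).1
  rw [x.total, neg_top] at h
  exact le_bot_iff.1 h

theorem map_compl (hA : MeasurableSet A) : x.toFun Aᶜ = ∼(x.toFun A) := by
  obtain ⟨hle, hsum⟩ := x.le_neg_and_oplus_eq_union hA hA.compl disjoint_compl_right
  rw [union_compl_self, x.total] at hsum
  refine le_antisymm (le_neg_of_le_neg hle) ?_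
  rw [le_iff_oplus, neg_neg]
  exact hsum

theorem isSharp_map_iUnion {f : ℕ → Set ℝ} (hdisj : Pairwise (Disjoint on f))
    (hmeas : ∀ n, MeasurableSet (f n)) (hsharp : ∀ n, IsSharp (x.toFun (f n))) :
    IsSharp (x.toFun (⋃ n, f n)) := by
  have hmeas_acc (n : ℕ) : MeasurableSet (accumulate f n) := by
    rw [accumulate_def]
    exact .biUnion (to_countable _) fun k _ => hmeas k
  have hsharp_acc (n : ℕ) : IsSharp (x.toFun (accumulate f n)) := by
    induction n with
    | zero => simpa using hsharp 0
    | succ n ih =>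
      rw [accumulate_succ, ← (x.le_neg_and_oplus_eq_union (hmeas_acc n) (hmeas (n + 1))
        (disjoint_accumulate hdisj n.lt_succ_self)).2]
      exact ih.oplus (hsharp (n + 1))
  have hlub := x.cont (accumulate f) hmeas_acc monotone_accumulate
  rw [iUnion_accumulate] at hlub
  exact .of_isLUB_range hlub hsharp_acc

end Observable

end SigmaMVEffectAlgebra

open SigmaMVEffectAlgebra in
/-- If an observable `x` on a σ-MV-effect algebra has `x((-∞,t))` sharp
(`b ∧ b' = 0`) for every `t ∈ ℝ`, then `x(A)` is sharp for every Borel set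
`A`; i.e. `x` is a sharp observable. -/
theorem sharp_spectral_resolution_implies_sharp_observable
    {E : Type*} [SigmaMVEffectAlgebra E] (x : Observable E)
    (h : ∀ t : ℝ, x.toFun (Set.Iio t) ⊓ neg (x.toFun (Set.Iio t)) = ⊥) :
    ∀ A : Set ℝ, MeasurableSet A → x.toFun A ⊓ neg (x.toFun A) = ⊥ := by
  have hborel : (inferInstance : MeasurableSpace ℝ) = .generateFrom (range Iio) :=
    BorelSpace.measurable_eq.trans (borel_eq_generateFrom_Iio ℝ)
  intro A hA
  induction A, hA using MeasurableSpace.induction_on_inter hborel isPiSystem_Iio with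
  | empty => simp [x.map_empty]
  | basic _ ht =>
    obtain ⟨t, rfl⟩ := ht
    exact h t
  | compl A hA hsharp =>
    rw [x.map_compl hA]
    exact IsSharp.neg hsharp
  | iUnion f hdisj hmeas hsharp => exact x.isSharp_map_iUnion hdisj hmeas hsharp
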